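/- For a finite set Ω = {z_1,…,z_M} ⊂ ℂ^d, the ideal I(Ω) is generated by the d^M polynomials ∏_{j=1}^M (Z_{ℓ_j} − z_{j,ℓ_j}) over all choices ℓ ∈ {1,…,d}^M. -/

import Mathlib

/-!
The vanishing ideal of a point `x` is the maximal ideal generated by the `X i - C (x i)`.
Maximal ideals of distinct points are coprime, so by the Chinese remainder theorem the vanishing
ideal of a finite set, the intersection of these ideals, is also their product; and a product of
ideals given by generators is generated by the products of one generator from each factor.
-/

open MvPolynomial
open scoped Pointwise

theorem Set.prod_range_eq_range_prod {ι α : Type*} [Fintype ι] [CommMonoid α] {κ : ι → Type*}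
    (f : ∀ i, κ i → α) :
    ∏ i, Set.range (f i) = Set.range fun g : ∀ i, κ i => ∏ i, f i (g i) := by
  ext a
  rw [Set.mem_fintype_prod]
  constructor
  · rintro ⟨g, hg, rfl⟩
    choose ℓ hℓ using hg
    exact ⟨ℓ, by simp only [hℓ]⟩
  · rintro ⟨ℓ, rfl⟩
    exact ⟨_, fun i => ⟨ℓ i, rfl⟩, rfl⟩

namespace MvPolynomial

variable {σ : Type*}

theorem sub_C_eval_mem_span_X_sub_C {R : Type*} [CommRing R] (x : σ → R) (p : MvPolynomial σ R) :
    p - C (eval x p) ∈ Ideal.span (Set.range fun i => X i - C (x i)) := by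
  set I := Ideal.span (Set.range fun i => (X i - C (x i) : MvPolynomial σ R))
  rw [← Ideal.Quotient.eq]
  -- Modulo `I` every `X i` becomes the constant `x i`, so reduction mod `I` factors through `eval x`.
  have hfactor : Ideal.Quotient.mk I = (Ideal.Quotient.mk I).comp (C.comp (eval x)) := by
    refine ringHom_ext (fun r => by simp) fun i => ?_
    simpa [Ideal.Quotient.eq] using (Ideal.subset_span ⟨i, rfl⟩ : X i - C (x i) ∈ I)
  exact congr($hfactor p)

variable {k : Type*} [Field k]

theorem vanishingIdeal_singleton_eq_span_X_sub_C (x : σ → k) :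
    vanishingIdeal k {x} = Ideal.span (Set.range fun i => X i - C (x i)) := by
  apply le_antisymm
  · intro p hp
    replace hp : eval x p = 0 := (mem_vanishingIdeal_singleton_iff x p).mp hp
    simpa [hp] using sub_C_eval_mem_span_X_sub_C x p
  · rw [Ideal.span_le]
    rintro _ ⟨i, rfl⟩
    simp

theorem vanishingIdeal_singleton_injective :
    Function.Injective fun x : σ → k => vanishingIdeal k {x} := by
  intro x y (hxy : vanishingIdeal k {x} = vanishingIdeal k {y})
  funext i
  have hx : X i - C (x i) ∈ vanishingIdeal k {x} := by simp
  have hy : X i - C (x i) ∈ vanishingIdeal k {y} := hxy ▸ hx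
  simpa [sub_eq_zero, eq_comm] using hy

theorem isCoprime_vanishingIdeal_singleton {x y : σ → k} (hxy : x ≠ y) :
    IsCoprime (vanishingIdeal k {x}) (vanishingIdeal k {y}) :=
  Ideal.isCoprime_iff_sup_eq.mpr <| Ideal.IsMaximal.coprime_of_ne inferInstance inferInstance <|
    vanishingIdeal_singleton_injective.ne hxy

theorem vanishingIdeal_iUnion {ι : Type*} (V : ι → Set (σ → k)) :
    vanishingIdeal k (⋃ i, V i) = ⨅ i, vanishingIdeal k (V i) := by
  ext p
  simpa [Submodule.mem_iInf] using forall_comm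

theorem vanishingIdeal_range_eq_prod {ι : Type*} [Fintype ι] {z : ι → σ → k}
    (hz : Function.Injective z) :
    vanishingIdeal k (Set.range z) = ∏ j, vanishingIdeal k {z j} := by
  rw [← Set.iUnion_singleton_eq_range, vanishingIdeal_iUnion,
    Ideal.prod_eq_iInf_of_pairwise_isCoprime
      fun i _ j _ hij => isCoprime_vanishingIdeal_singleton (hz.ne hij)]
  simp

end MvPolynomial

/-- For pairwise distinct points `z 1, …, z M ∈ ℂ^d`, the vanishing ideal
of `Ω = {z 1, …, z M}` is generated by the `d^M` polynomials
`∏ j, (Z (ℓ j) - z j (ℓ j))` over all choices `ℓ : {1,…,M} → {1,…,d}`. -/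
theorem vanishingIdeal_eq_span_products
    (d M : ℕ) (z : Fin M → Fin d → ℂ) (hz : Function.Injective z) :
    MvPolynomial.vanishingIdeal ℂ (Set.range z) =
      Ideal.span (Set.range fun ℓ : Fin M → Fin d =>
        ∏ j, (MvPolynomial.X (ℓ j) - MvPolynomial.C (z j (ℓ j)))) := by
  simp_rw [vanishingIdeal_range_eq_prod hz, vanishingIdeal_singleton_eq_span_X_sub_C,
    Ideal.prod_span, Set.prod_range_eq_range_prod]
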